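/- arXiv:2102.06677 — 3 statements merged into one kernel-verified Lean document; each statement's English description precedes it below -/
import Mathlib

section
/- Suppose that: (1) 𝓘 attains a global minimum on the feasible set 𝓕 (in particular 𝓕 ≠ ∅ and the optimal value I_* = inf_{(x,z) ∈ 𝓕} 𝓘(x,z) is finite); (2) every image G(x,ω) is a closed subset of ℝ^m; (3) 𝓘 is Lipschitz continuous on every bounded subset of X; (4) there exists c ≥ 0 such that the set {(x,y) ∈ X : x ∈ A, Φ_c(x,y) < I_*} is bounded in X. Then the penalty function Φ_c is globally exact: there exists c_* ≥ 0 such that for every c ≥ c_* the set of global minimizers of Φ_c over A × L^p(Ω;ℝ^m) coincides with the set of global minimizers of 𝓘 over 𝓕. -/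
/-!
Two facts drive the proof. First, the penalty dominates the distance to the feasible set: for
`x ∈ A` and `y ∈ L^p`, a measurable selection of `ω ↦ G(x, ω)` that is almost nearest to `y(ω)`
(the limit of iterated choices from a countable dense sequence, which lies in the closed set
`G(x, ω)`) gives feasible points within `φ(x, y) + ε` of `(x, y)`. Second, the sublevel set below
`I_*` is bounded and `𝓘` is `L`-Lipschitz on a neighbourhood of it, so moving to such a feasible
point raises `𝓘` by at most `L · φ`. Hence `Φ_c ≥ I_*` on `A × L^p` as soon as `c` exceeds `L`
and a few constants bounding that set; for strictly larger `c`, a minimizer of `Φ_c` must have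
zero penalty, i.e. be feasible, and conversely.
-/

open MeasureTheory Filter Topology Metric Set
open scoped ENNReal NNReal

noncomputable section

theorem infEDist_prodMk_le_infEDist {α β : Type*} [PseudoEMetricSpace α] [PseudoEMetricSpace β]
    {F : Set (α × β)} {x : α} {T : Set β} (hT : ∀ Y ∈ T, (x, Y) ∈ F) (y : β) :
    infEDist (x, y) F ≤ infEDist y T :=
  le_infEDist.2 fun Y hY => (infEDist_le_edist_of_mem (hT Y hY)).trans_eq (by simp [Prod.edist_eq])

namespace ExactPenalty

variable {X : Type*}

def penalized (I : X → ℝ) (φ : X → ℝ≥0∞) (c : ℝ) (z : X) : EReal :=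
  (I z : EReal) + (c : EReal) * (φ z : EReal)

variable {I : X → ℝ} {φ : X → ℝ≥0∞}

lemma penalized_of_ne_top {z : X} (hz : φ z ≠ ∞) (c : ℝ) :
    penalized I φ c z = ((I z + c * (φ z).toReal : ℝ) : EReal) := by
  rw [penalized, ← EReal.coe_ennreal_toReal hz, ← EReal.coe_mul, ← EReal.coe_add]

lemma penalized_of_eq_top {z : X} (hz : φ z = ∞) {c : ℝ} (hc : 0 < c) :
    penalized I φ c z = ⊤ := by
  rw [penalized, hz, EReal.coe_ennreal_top, EReal.coe_mul_top_of_pos hc, EReal.coe_add_top]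

lemma penalized_of_eq_zero {z : X} (hz : φ z = 0) (c : ℝ) : penalized I φ c z = I z := by
  rw [penalized, hz, EReal.coe_ennreal_zero, mul_zero, add_zero]

lemma le_add_mul_of_infEDist_le [PseudoMetricSpace X] {F s : Set X} {K : ℝ≥0} {a r : ℝ} {w : X}
    (hI : LipschitzOnWith K I s) (hF : ∀ z ∈ F, a ≤ I z) (hr : 0 ≤ r)
    (hw : infEDist w F ≤ ENNReal.ofReal r) (hs : closedBall w (r + 1) ⊆ s) :
    a ≤ I w + K * r := by
  have hnear : ∀ t ∈ Ioo r (r + 1), a ≤ I w + K * t := by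
    rintro t ⟨hrt, ht⟩
    obtain ⟨z, hzF, hwz⟩ := infEDist_lt_iff.1
      (hw.trans_lt ((ENNReal.ofReal_lt_ofReal_iff_of_nonneg hr).2 hrt))
    rw [edist_comm, edist_dist, ENNReal.ofReal_lt_ofReal_iff_of_nonneg dist_nonneg] at hwz
    have hzs : z ∈ s := hs (mem_closedBall.2 (by linarith))
    have hws : w ∈ s := hs (mem_closedBall_self (by linarith))
    calc a ≤ I z := hF z hzF
      _ ≤ I w + K * dist z w := by
        have := (hI.dist_le_mul z hzs w hws)
        rw [Real.dist_eq] at this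
        linarith [le_abs_self (I z - I w)]
      _ ≤ I w + K * t := by gcongr
  exact ge_of_tendsto
    (((continuous_const.add (continuous_const.mul continuous_id)).tendsto r).mono_left
      nhdsWithin_le_nhds) (eventually_of_mem (Ioo_mem_nhdsGT (lt_add_one r)) hnear)

lemma exists_forall_le_penalized [PseudoMetricSpace X] {C F : Set X} {zs : X}
    (herr : ∀ z ∈ C, infEDist z F ≤ φ z) (hzs : ∀ z ∈ F, I zs ≤ I z)
    (hLip : ∀ B : Set X, Bornology.IsBounded B → ∃ K, LipschitzOnWith K I B) (c₀ : ℝ)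
    (hbdd : Bornology.IsBounded {z ∈ C | penalized I φ c₀ z < I zs}) :
    ∃ c₁, 0 < c₁ ∧ ∀ c, c₁ ≤ c → ∀ w ∈ C, (I zs : EReal) ≤ penalized I φ c w := by
  obtain ⟨R, hR0, hR⟩ := hbdd.subset_closedBall_lt 0 zs
  obtain ⟨K, hK⟩ := hLip (closedBall zs (R + 2)) isBounded_closedBall
  have hKR : (0 : ℝ) ≤ K * R := mul_nonneg K.2 hR0.le
  refine ⟨max c₀ (K * R + K + 1), lt_max_of_lt_right (by linarith), fun c hc w hw => ?_⟩
  have hc₀ : c₀ ≤ c := le_of_max_le_left hc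
  have hcK : K * R + K + 1 ≤ c := le_of_max_le_right hc
  by_contra! hlt
  have hφw : φ w ≠ ∞ := fun h => by
    rw [penalized_of_eq_top h (by linarith)] at hlt
    exact not_top_lt hlt
  set r := (φ w).toReal
  have hr : 0 ≤ r := ENNReal.toReal_nonneg
  have hlt' : I w + c * r < I zs := by
    rwa [penalized_of_ne_top hφw, EReal.coe_lt_coe_iff] at hlt
  have hwR : dist w zs ≤ R := by
    refine mem_closedBall.1 (hR ⟨hw, ?_⟩)
    rw [penalized_of_ne_top hφw, EReal.coe_lt_coe_iff]
    nlinarith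
  have hball : closedBall zs R ⊆ closedBall zs (R + 2) :=
    closedBall_subset_closedBall (by linarith)
  have hgap : I zs - I w ≤ K * R := by
    have := hK.dist_le_mul zs (hball (mem_closedBall_self hR0.le)) w (hball (mem_closedBall.2 hwR))
    rw [Real.dist_eq, dist_comm] at this
    nlinarith [le_abs_self (I zs - I w), K.2]
  have hr1 : r < 1 := by
    by_contra! h
    nlinarith [mul_le_mul_of_nonneg_left h (show 0 ≤ c by linarith)]
  have hfeas := le_add_mul_of_infEDist_le hK hzs hr
    ((herr w hw).trans_eq (ENNReal.ofReal_toReal hφw).symm)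
    (fun x hx => mem_closedBall.2 (by linarith [dist_triangle x w zs, mem_closedBall.1 hx]))
  nlinarith [mul_le_mul_of_nonneg_right (show (K : ℝ) ≤ c by linarith) hr]

theorem exists_penalized_minimizers_eq [PseudoMetricSpace X] {C : Set X} {zs : X}
    (herr : ∀ z ∈ C, infEDist z {z ∈ C | φ z = 0} ≤ φ z)
    (hzs : zs ∈ {z ∈ C | φ z = 0} ∧ ∀ z ∈ {z ∈ C | φ z = 0}, I zs ≤ I z)
    (hLip : ∀ B : Set X, Bornology.IsBounded B → ∃ K, LipschitzOnWith K I B) (c₀ : ℝ)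
    (hbdd : Bornology.IsBounded {z ∈ C | penalized I φ c₀ z < I zs}) :
    ∃ c', 0 ≤ c' ∧ ∀ c, c' ≤ c →
      {z ∈ C | ∀ w ∈ C, penalized I φ c z ≤ penalized I φ c w} =
        {z ∈ {z ∈ C | φ z = 0} | ∀ w ∈ {z ∈ C | φ z = 0}, I z ≤ I w} := by
  obtain ⟨c₁, hc₁, hlow⟩ := exists_forall_le_penalized herr hzs.2 hLip c₀ hbdd
  refine ⟨c₁ + 1, by positivity, fun c hc => ?_⟩
  have hzs_eq : penalized I φ c zs = I zs := penalized_of_eq_zero hzs.1.2 c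
  -- `Φ_c z ≤ I zs ≤ Φ_{c₁} z` with `c₁ < c` forces `φ z = 0`
  have hzero : ∀ z ∈ C, penalized I φ c z ≤ I zs → φ z = 0 := by
    intro z hz hle
    have hφz : φ z ≠ ∞ := fun h => by
      rw [penalized_of_eq_top h (by linarith)] at hle
      exact EReal.coe_ne_top _ (top_le_iff.1 hle)
    have h₁ := hlow c₁ le_rfl z hz
    rw [penalized_of_ne_top hφz, EReal.coe_le_coe_iff] at hle h₁
    have : (φ z).toReal = 0 := by nlinarith [ENNReal.toReal_nonneg (a := φ z)]
    exact (ENNReal.toReal_eq_zero_iff _).1 this |>.resolve_right hφz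
  ext z
  constructor
  · rintro ⟨hzC, hmin⟩
    have hle := (hmin zs hzs.1.1).trans_eq hzs_eq
    have hφz := hzero z hzC hle
    rw [penalized_of_eq_zero hφz, EReal.coe_le_coe_iff] at hle
    exact ⟨⟨hzC, hφz⟩, fun w hw => hle.trans (hzs.2 w hw)⟩
  · rintro ⟨⟨hzC, hφz⟩, hmin⟩
    refine ⟨hzC, fun w hw => ?_⟩
    rw [penalized_of_eq_zero hφz]
    exact (EReal.coe_le_coe_iff.2 (hmin zs hzs.1)).trans (hlow c (by linarith) w hw)

end ExactPenalty

section Selection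

variable {Ω E : Type*} [MeasurableSpace Ω] [MetricSpace E] [SecondCountableTopology E]
  [MeasurableSpace E] [BorelSpace E] {S : Ω → Set E}

theorem Measurable.infEDist_of_forall (hS : ∀ v, Measurable fun ω => infEDist v (S ω))
    {u : Ω → E} (hu : Measurable u) : Measurable fun ω => infEDist (u ω) (S ω) :=
  (measurable_uncurry_of_continuous_of_measurable (fun _ => continuous_infEDist) hS).comp
    (hu.prodMk measurable_id)

theorem exists_measurable_edist_lt_infEDist_add [Nonempty E]
    (hS : ∀ v, Measurable fun ω => infEDist v (S ω)) {u : Ω → E} (hu : Measurable u)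
    {η : ℝ≥0∞} (hη : η ≠ 0) :
    ∃ u', Measurable u' ∧
      (∀ ω, (S ω).Nonempty →
        infEDist (u' ω) (S ω) < η ∧ edist (u ω) (u' ω) < infEDist (u ω) (S ω) + η) ∧
      ∀ ω, ¬(S ω).Nonempty → u' ω = u ω := by
  classical
  set v := TopologicalSpace.denseSeq E
  let Q : Ω → ℕ → Prop := fun ω n =>
    ¬(S ω).Nonempty ∨
      (infEDist (v n) (S ω) < η ∧ edist (u ω) (v n) < infEDist (u ω) (S ω) + η)
  have hT : MeasurableSet {ω | (S ω).Nonempty} := by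
    convert (hu.infEDist_of_forall hS) (measurableSet_singleton ∞).compl using 1
    ext ω
    simp [infEDist_eq_top_iff, nonempty_iff_ne_empty]
  have hQ : ∀ ω, ∃ n, Q ω n := by
    intro ω
    by_cases hne : (S ω).Nonempty
    swap; · exact ⟨0, Or.inl hne⟩
    have hη2 : η / 2 ≠ 0 := ENNReal.half_pos hη |>.ne'
    obtain ⟨s, hs, hus⟩ := infEDist_lt_iff.1
      (ENNReal.lt_add_right (infEDist_ne_top hne) hη2 : infEDist (u ω) (S ω) < _)
    obtain ⟨_, ⟨n, rfl⟩, hsv⟩ :=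
      EMetric.mem_closure_iff.1 (TopologicalSpace.denseRange_denseSeq E s) _
        (pos_iff_ne_zero.2 hη2)
    refine ⟨n, Or.inr ⟨?_, ?_⟩⟩
    · calc infEDist (v n) (S ω) ≤ edist (v n) s := infEDist_le_edist_of_mem hs
        _ < η / 2 := by rwa [edist_comm]
        _ ≤ η := ENNReal.half_le_self
    · calc edist (u ω) (v n) ≤ edist (u ω) s + edist s (v n) := edist_triangle _ _ _
        _ < infEDist (u ω) (S ω) + η / 2 + η / 2 := ENNReal.add_lt_add hus hsv
        _ = infEDist (u ω) (S ω) + η := by rw [add_assoc, ENNReal.add_halves]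
  have hQm : ∀ n, MeasurableSet {ω | Q ω n} := fun n =>
    hT.compl.union ((measurableSet_lt (hS (v n)) measurable_const).inter
      (measurableSet_lt (hu.edist measurable_const) ((hu.infEDist_of_forall hS).add_const η)))
  refine ⟨{ω | (S ω).Nonempty}.piecewise (fun ω => v (Nat.find (hQ ω))) u,
    (measurable_from_nat.comp (measurable_find hQ hQm)).piecewise hT hu, fun ω hne => ?_,
    fun ω hne => piecewise_eq_of_notMem _ _ _ hne⟩
  rw [piecewise_eq_of_mem _ _ _ (show ω ∈ {ω | (S ω).Nonempty} from hne)]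
  exact (Nat.find_spec (hQ ω)).resolve_left (not_not.2 hne)

theorem exists_measurable_selection_edist_le [Nonempty E] [CompleteSpace E]
    (hcl : ∀ ω, IsClosed (S ω)) (hS : ∀ v, Measurable fun ω => infEDist v (S ω))
    {u : Ω → E} (hu : Measurable u) {ε : ℝ≥0∞} (hε0 : ε ≠ 0) (hεtop : ε ≠ ∞) :
    ∃ Y, Measurable Y ∧ (∀ ω, (S ω).Nonempty → Y ω ∈ S ω) ∧
      ∀ ω, edist (u ω) (Y ω) ≤ infEDist (u ω) (S ω) + ε := by
  set δ := ε / 3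
  have hδ0 : δ ≠ 0 := ENNReal.div_ne_zero.2 ⟨hε0, by norm_num⟩
  have hδtop : δ ≠ ∞ := ENNReal.div_ne_top hεtop (by norm_num)
  have h2 : (2⁻¹ : ℝ≥0∞) < 1 := by norm_num
  set η : ℕ → ℝ≥0∞ := fun k => δ * 2⁻¹ ^ (k + 1)
  have hη_anti : ∀ k, η (k + 1) ≤ η k := fun k =>
    mul_le_mul_right (pow_le_pow_of_le_one zero_le h2.le (Nat.le_succ _)) δ
  have hη_double : ∀ k, η k + η k = δ * 2⁻¹ ^ k := fun k => by
    rw [show η k = δ * 2⁻¹ ^ (k + 1) from rfl, pow_succ, ← mul_assoc, ← div_eq_mul_inv,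
      ENNReal.add_halves]
  have hη_lim : Tendsto η atTop (𝓝 0) := by
    simpa using ENNReal.Tendsto.const_mul ((ENNReal.tendsto_pow_atTop_nhds_zero_of_lt_one
      h2).comp (tendsto_add_atTop_nat 1)) (Or.inr hδtop)
  have step : ∀ (k : ℕ) (w : {f : Ω → E // Measurable f}), ∃ w' : {f : Ω → E // Measurable f},
      (∀ ω, (S ω).Nonempty →
        infEDist (w'.1 ω) (S ω) < η k ∧ edist (w.1 ω) (w'.1 ω) < infEDist (w.1 ω) (S ω) + η k) ∧
      ∀ ω, ¬(S ω).Nonempty → w'.1 ω = w.1 ω := fun k w => by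
    obtain ⟨w', hw', hnear, hoff⟩ := exists_measurable_edist_lt_infEDist_add hS w.2
      (η := η k) (by simp [η, hδ0])
    exact ⟨⟨w', hw'⟩, hnear, hoff⟩
  choose next hnext_near hnext_off using step
  let U : ℕ → {f : Ω → E // Measurable f} := fun n => Nat.rec ⟨u, hu⟩ next n
  -- dropping the starting point `u`, every term is within `η k` of `S ω`, so consecutive terms
  -- are within `η k + η (k + 1)`
  let W : ℕ → Ω → E := fun k => (U (k + 1)).1
  have hW_near : ∀ ω, (S ω).Nonempty → ∀ k, infEDist (W k ω) (S ω) < η k :=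
    fun ω hne k => (hnext_near k (U k) ω hne).1
  have hW_geom : ∀ ω k, edist (W k ω) (W (k + 1) ω) ≤ δ * 2⁻¹ ^ k := by
    intro ω k
    by_cases hne : (S ω).Nonempty
    · calc edist (W k ω) (W (k + 1) ω) ≤ infEDist (W k ω) (S ω) + η (k + 1) :=
            (hnext_near (k + 1) (U (k + 1)) ω hne).2.le
        _ ≤ η k + η k := add_le_add (hW_near ω hne k).le (hη_anti k)
        _ = δ * 2⁻¹ ^ k := hη_double k
    · simp [W, U, hnext_off (k + 1) (U (k + 1)) ω hne]
  choose Y hY using fun ω => cauchySeq_tendsto_of_complete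
    (cauchySeq_of_edist_le_geometric 2⁻¹ δ h2 hδtop (hW_geom ω))
  refine ⟨Y, measurable_of_tendsto_metrizable (fun k => (U (k + 1)).2) (tendsto_pi_nhds.2 hY),
    fun ω hne => ?_, fun ω => ?_⟩
  · refine (mem_iff_infEDist_zero_of_closed (hcl ω)).2 (nonpos_iff_eq_zero.1 ?_)
    exact le_of_tendsto_of_tendsto' ((continuous_infEDist.tendsto _).comp (hY ω)) hη_lim
      fun k => (hW_near ω hne k).le
  by_cases hne : (S ω).Nonempty
  swap
  · simp [not_nonempty_iff_eq_empty.1 hne]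
  have htail : edist (W 0 ω) (Y ω) ≤ 2 * δ := by
    refine (edist_le_of_edist_le_geometric_of_tendsto₀ 2⁻¹ δ (hW_geom ω) (hY ω)).trans_eq ?_
    rw [ENNReal.one_sub_inv_two, div_eq_mul_inv, inv_inv, mul_comm]
  calc edist (u ω) (Y ω) ≤ edist (u ω) (W 0 ω) + edist (W 0 ω) (Y ω) := edist_triangle _ _ _
    _ ≤ infEDist (u ω) (S ω) + δ + 2 * δ := by
        gcongr
        refine (hnext_near 0 (U 0) ω hne).2.le.trans (add_le_add le_rfl ?_)
        simpa [η, ← div_eq_mul_inv] using ENNReal.half_le_self (a := δ)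
    _ = infEDist (u ω) (S ω) + ε := by
        rw [add_assoc, ← one_add_mul]
        norm_num
        rw [ENNReal.mul_div_cancel (by norm_num) (by norm_num)]

end Selection

section
variable {α : Type*} {m : MeasurableSpace α} {μ : Measure α} {p : ℝ≥0∞}

theorem eLpNorm_ennreal_eq_ite (hp : p ≠ 0) (f : α → ℝ≥0∞) :
    eLpNorm f p μ =
      if p = ∞ then essSup f μ else (∫⁻ x, f x ^ p.toReal ∂μ) ^ (1 / p.toReal) := by
  split_ifs with htop
  · simp [htop, eLpNorm_exponent_top, eLpNormEssSup]
  · simp [eLpNorm_eq_lintegral_rpow_enorm_toReal hp htop]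

theorem ae_lt_top_of_eLpNorm_ne_top {f : α → ℝ≥0∞} (hf : AEMeasurable f μ) (hp : p ≠ 0)
    (h : eLpNorm f p μ ≠ ∞) : ∀ᵐ x ∂μ, f x < ∞ := by
  by_cases htop : p = ∞
  · rw [htop, eLpNorm_exponent_top] at h
    filter_upwards [ae_le_eLpNormEssSup (μ := μ) (f := f)] with x hx
    exact hx.trans_lt h.lt_top
  · have hint := lintegral_rpow_enorm_lt_top_of_eLpNorm_lt_top hp htop h.lt_top
    filter_upwards [ae_lt_top' (hf.pow_const p.toReal) hint.ne] with x hx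
    exact (ENNReal.rpow_lt_top_iff_of_pos (ENNReal.toReal_pos hp htop)).1 hx
end

section
variable {Ω E : Type*} {mΩ : MeasurableSpace Ω} {P : Measure Ω} {S : Ω → Set E}

theorem AEMeasurable.infEDist_of_forall [MetricSpace E] [SecondCountableTopology E]
    [MeasurableSpace E] [BorelSpace E] (hS : ∀ v, Measurable fun ω => infEDist v (S ω))
    {u : Ω → E} (hu : AEMeasurable u P) : AEMeasurable (fun ω => infEDist (u ω) (S ω)) P :=
  (hu.measurable_mk.infEDist_of_forall hS).aemeasurable.congr
    (hu.ae_eq_mk.mono fun ω h => by simp only [h])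

theorem eLpNorm_infEDist_eq_zero_iff [PseudoEMetricSpace E] {p : ℝ≥0∞} (hp : p ≠ 0)
    (hcl : ∀ ω, IsClosed (S ω)) {u : Ω → E}
    (hmeas : AEMeasurable (fun ω => infEDist (u ω) (S ω)) P) :
    eLpNorm (fun ω => infEDist (u ω) (S ω)) p P = 0 ↔ ∀ᵐ ω ∂P, u ω ∈ S ω := by
  rw [eLpNorm_eq_zero_iff hmeas.aestronglyMeasurable hp]
  exact eventually_congr (.of_forall fun ω => (mem_iff_infEDist_zero_of_closed (hcl ω)).symm)

theorem infEDist_setOf_ae_mem_le_eLpNorm [NormedAddCommGroup E] [SecondCountableTopology E]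
    [CompleteSpace E] [MeasurableSpace E] [BorelSpace E] [IsProbabilityMeasure P]
    {p : ℝ≥0∞} [Fact (1 ≤ p)] (hcl : ∀ ω, IsClosed (S ω))
    (hS : ∀ v, Measurable fun ω => infEDist v (S ω)) (y : Lp E p P) :
    infEDist y {Y : Lp E p P | ∀ᵐ ω ∂P, Y ω ∈ S ω} ≤
      eLpNorm (fun ω => infEDist (y ω) (S ω)) p P := by
  have hp : p ≠ 0 := (zero_lt_one.trans_le Fact.out).ne'
  set D := fun ω => infEDist (y ω) (S ω)
  have hy := Lp.aestronglyMeasurable y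
  have hD : AEMeasurable D P := hy.aemeasurable.infEDist_of_forall hS
  rcases eq_or_ne (eLpNorm D p P) ∞ with hDtop | hDfin
  · simp [hDtop]
  refine ENNReal.le_of_forall_pos_le_add fun ε hε _ => ?_
  obtain ⟨Y, hYm, hYS, hYdist⟩ := exists_measurable_selection_edist_le hcl hS
    hy.stronglyMeasurable_mk.measurable (ε := ε) (by simpa using hε.ne') ENNReal.coe_ne_top
  have hYy : eLpNorm (Y - ⇑y) p P ≤ eLpNorm D p P + ε := by
    calc eLpNorm (Y - ⇑y) p P ≤ eLpNorm (D + fun _ => (ε : ℝ≥0∞)) p P := by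
          refine eLpNorm_mono_enorm_ae ?_
          filter_upwards [hy.ae_eq_mk] with ω hω
          simpa [D, hω, ← edist_eq_enorm_sub, edist_comm] using hYdist ω
      _ ≤ eLpNorm D p P + eLpNorm (fun _ => (ε : ℝ≥0∞)) p P :=
          eLpNorm_add_le hD.aestronglyMeasurable aestronglyMeasurable_const Fact.out
      _ = eLpNorm D p P + ε := by simp [eLpNorm_const _ hp (IsProbabilityMeasure.ne_zero P)]
  have hYLp : MemLp Y p P := by
    have hdiff : MemLp (Y - ⇑y) p P :=
      ⟨hYm.aestronglyMeasurable.sub hy, hYy.trans_lt (by finiteness)⟩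
    simpa using hdiff.add (Lp.memLp y)
  refine (infEDist_le_edist_of_mem (y := hYLp.toLp Y) ?_).trans ?_
  · filter_upwards [hYLp.coeFn_toLp, ae_lt_top_of_eLpNorm_ne_top hD hp hDfin] with ω hY hDω
    rw [hY]
    exact hYS ω (nonempty_iff_ne_empty.2 fun h => by simp [D, h] at hDω)
  · rw [edist_comm, Lp.edist_def, eLpNorm_congr_ae (hYLp.coeFn_toLp.sub .rfl)]
    exact hYy
end

theorem exact_penalty_distance_term_general
    {d m : ℕ} {Ω : Type*} [MeasurableSpace Ω] (P : Measure Ω) [IsProbabilityMeasure P]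
    (p : ℝ≥0∞) [Fact (1 ≤ p)]
    (A : Set (EuclideanSpace ℝ (Fin d)))
    (G : EuclideanSpace ℝ (Fin d) → Ω → Set (EuclideanSpace ℝ (Fin m)))
    (hGclosed : ∀ x ω, IsClosed (G x ω))
    (hGmeas : ∀ x v, Measurable fun ω => EMetric.infEdist v (G x ω))
    (𝓘 : EuclideanSpace ℝ (Fin d) × Lp (EuclideanSpace ℝ (Fin m)) p P → ℝ)
    (φ : EuclideanSpace ℝ (Fin d) × Lp (EuclideanSpace ℝ (Fin m)) p P → ℝ≥0∞)
    (hφ : ∀ z, φ z =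
      if p = ∞ then essSup (fun ω => EMetric.infEdist (z.2 ω) (G z.1 ω)) P
      else (∫⁻ ω, EMetric.infEdist (z.2 ω) (G z.1 ω) ^ p.toReal ∂P) ^ (1 / p.toReal))
    (Φ : ℝ → EuclideanSpace ℝ (Fin d) × Lp (EuclideanSpace ℝ (Fin m)) p P → EReal)
    (hΦ : ∀ c z, Φ c z = ((𝓘 z : ℝ) : EReal) + (c : EReal) * ((φ z : ℝ≥0∞) : EReal))
    (𝓕 : Set (EuclideanSpace ℝ (Fin d) × Lp (EuclideanSpace ℝ (Fin m)) p P))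
    (h𝓕 : 𝓕 = {z | z.1 ∈ A ∧ ∀ᵐ ω ∂P, z.2 ω ∈ G z.1 ω})
    -- (1) existence of a globally optimal solution of the problem (𝒫)
    (zs : EuclideanSpace ℝ (Fin d) × Lp (EuclideanSpace ℝ (Fin m)) p P)
    (hzs : zs ∈ 𝓕 ∧ ∀ w ∈ 𝓕, 𝓘 zs ≤ 𝓘 w)
    -- (3) 𝓘 is Lipschitz continuous on bounded sets
    (hLip : ∀ B : Set (EuclideanSpace ℝ (Fin d) × Lp (EuclideanSpace ℝ (Fin m)) p P),
      Bornology.IsBounded B → ∃ L : ℝ, 0 < L ∧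
        ∀ z₁ ∈ B, ∀ z₂ ∈ B, |𝓘 z₁ - 𝓘 z₂| ≤ L * ‖z₁ - z₂‖)
    -- (4) a sublevel set below the optimal value I_* = 𝓘 zs is bounded
    (hbdd : ∃ c : ℝ, 0 ≤ c ∧
      Bornology.IsBounded {z | z.1 ∈ A ∧ Φ c z < ((𝓘 zs : ℝ) : EReal)}) :
    ∃ cstar : ℝ, 0 ≤ cstar ∧ ∀ c : ℝ, cstar ≤ c →
      {z | z.1 ∈ A ∧ ∀ w, w.1 ∈ A → Φ c z ≤ Φ c w} = {z ∈ 𝓕 | ∀ w ∈ 𝓕, 𝓘 z ≤ 𝓘 w} := by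
  have hp : p ≠ 0 := (zero_lt_one.trans_le Fact.out).ne'
  have hφ_eq : ∀ z, φ z = eLpNorm (fun ω => infEDist (z.2 ω) (G z.1 ω)) p P := fun z =>
    (hφ z).trans (eLpNorm_ennreal_eq_ite hp _).symm
  have hφ_zero : ∀ z, φ z = 0 ↔ ∀ᵐ ω ∂P, z.2 ω ∈ G z.1 ω := fun z => by
    rw [hφ_eq, eLpNorm_infEDist_eq_zero_iff hp (hGclosed z.1)
      ((Lp.aestronglyMeasurable z.2).aemeasurable.infEDist_of_forall (hGmeas z.1))]
  have h𝓕_eq : 𝓕 = {z | z.1 ∈ A ∧ φ z = 0} := by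
    simp only [h𝓕, hφ_zero]
  have herr : ∀ z ∈ {z : _ × _ | z.1 ∈ A}, infEDist z {z | z.1 ∈ A ∧ φ z = 0} ≤ φ z := by
    rintro ⟨x, y⟩ hx
    refine (infEDist_prodMk_le_infEDist (T := {Y : Lp _ p P | ∀ᵐ ω ∂P, Y ω ∈ G x ω})
      (fun Y hY => ?_) y).trans ?_
    · exact ⟨hx, (hφ_zero _).2 hY⟩
    · rw [hφ_eq]
      exact infEDist_setOf_ae_mem_le_eLpNorm (hGclosed x) (hGmeas x) y
  have hLipOn : ∀ B, Bornology.IsBounded B → ∃ K, LipschitzOnWith K 𝓘 B := fun B hB => by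
    obtain ⟨L, hL, hLB⟩ := hLip B hB
    refine ⟨L.toNNReal, .of_dist_le_mul fun z₁ h₁ z₂ h₂ => ?_⟩
    rw [Real.coe_toNNReal _ hL.le, Real.dist_eq, dist_eq_norm]
    exact hLB z₁ h₁ z₂ h₂
  obtain ⟨c₀, -, hbdd⟩ := hbdd
  obtain rfl : Φ = ExactPenalty.penalized 𝓘 φ := funext fun c => funext (hΦ c)
  subst h𝓕_eq
  exact ExactPenalty.exists_penalized_minimizers_eq herr hzs hLipOn c₀ hbdd

/-- **Theorem (global exactness of the penalty function with the distance penalty term).**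
Let `1 ≤ p ≤ ∞`, `A ⊆ ℝ^d` be closed, `G` have closed images, and let
`φ(x,y) = (∫ dist(y(ω), G(x,ω))^p dP)^{1/p}` (essential supremum when `p = ∞`),
`Φ_c = 𝓘 + c·φ`. If `𝓘` attains a global minimum on the feasible set `𝓕`, `𝓘` is Lipschitz
continuous on bounded sets, and some sublevel set `{(x,y) : x ∈ A, Φ_c(x,y) < I_*}` is bounded,
then `Φ_c` is globally exact: there is `c_* ≥ 0` such that for all `c ≥ c_*` the global minimizers
of `Φ_c` on `A × L^p` coincide with the global minimizers of `𝓘` on `𝓕`. -/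
theorem exact_penalty_distance_term
    {d m : ℕ} {Ω : Type*} [MeasurableSpace Ω] (P : Measure Ω) [IsProbabilityMeasure P]
    (p : ℝ≥0∞) [Fact (1 ≤ p)]
    (f : EuclideanSpace ℝ (Fin d) → EuclideanSpace ℝ (Fin m) → Ω → ℝ)
    (A : Set (EuclideanSpace ℝ (Fin d))) (hA : IsClosed A)
    (G : EuclideanSpace ℝ (Fin d) → Ω → Set (EuclideanSpace ℝ (Fin m)))
    (hGclosed : ∀ x ω, IsClosed (G x ω))
    (hGmeas : ∀ x v, Measurable fun ω => EMetric.infEdist v (G x ω))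
    (hint : ∀ (x : EuclideanSpace ℝ (Fin d)) (y : Lp (EuclideanSpace ℝ (Fin m)) p P),
      Integrable (fun ω => f x (y ω) ω) P)
    (𝓘 : EuclideanSpace ℝ (Fin d) × Lp (EuclideanSpace ℝ (Fin m)) p P → ℝ)
    (h𝓘 : ∀ z, 𝓘 z = ∫ ω, f z.1 (z.2 ω) ω ∂P)
    (φ : EuclideanSpace ℝ (Fin d) × Lp (EuclideanSpace ℝ (Fin m)) p P → ℝ≥0∞)
    (hφ : ∀ z, φ z =
      if p = ∞ then essSup (fun ω => EMetric.infEdist (z.2 ω) (G z.1 ω)) P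
      else (∫⁻ ω, EMetric.infEdist (z.2 ω) (G z.1 ω) ^ p.toReal ∂P) ^ (1 / p.toReal))
    (Φ : ℝ → EuclideanSpace ℝ (Fin d) × Lp (EuclideanSpace ℝ (Fin m)) p P → EReal)
    (hΦ : ∀ c z, Φ c z = ((𝓘 z : ℝ) : EReal) + (c : EReal) * ((φ z : ℝ≥0∞) : EReal))
    (𝓕 : Set (EuclideanSpace ℝ (Fin d) × Lp (EuclideanSpace ℝ (Fin m)) p P))
    (h𝓕 : 𝓕 = {z | z.1 ∈ A ∧ ∀ᵐ ω ∂P, z.2 ω ∈ G z.1 ω})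
    -- (1) existence of a globally optimal solution of the problem (𝒫)
    (zs : EuclideanSpace ℝ (Fin d) × Lp (EuclideanSpace ℝ (Fin m)) p P)
    (hzs : zs ∈ 𝓕 ∧ ∀ w ∈ 𝓕, 𝓘 zs ≤ 𝓘 w)
    -- (3) 𝓘 is Lipschitz continuous on bounded sets
    (hLip : ∀ B : Set (EuclideanSpace ℝ (Fin d) × Lp (EuclideanSpace ℝ (Fin m)) p P),
      Bornology.IsBounded B → ∃ L : ℝ, 0 < L ∧
        ∀ z₁ ∈ B, ∀ z₂ ∈ B, |𝓘 z₁ - 𝓘 z₂| ≤ L * ‖z₁ - z₂‖)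
    -- (4) a sublevel set below the optimal value I_* = 𝓘 zs is bounded
    (hbdd : ∃ c : ℝ, 0 ≤ c ∧
      Bornology.IsBounded {z | z.1 ∈ A ∧ Φ c z < ((𝓘 zs : ℝ) : EReal)}) :
    ∃ cstar : ℝ, 0 ≤ cstar ∧ ∀ c : ℝ, cstar ≤ c →
      {z | z.1 ∈ A ∧ ∀ w, w.1 ∈ A → Φ c z ≤ Φ c w} = {z ∈ 𝓕 | ∀ w ∈ 𝓕, 𝓘 z ≤ 𝓘 w} :=
  exact_penalty_distance_term_general P p A G hGclosed hGmeas 𝓘 φ hφ Φ hΦ 𝓕 h𝓕 zs hzs hLip hbdd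
end
end

section
/- Let W be a set, A ⊆ W, I : W → ℝ ∪ {+∞}, φ : W → [0, +∞], M = {w ∈ W : φ(w) = 0}, and Φ_c = I + c·φ for c ≥ 0. Assume M ∩ A ≠ ∅ and I_* := inf_{w ∈ M ∩ A} I(w) is finite. If there exists c_* ≥ 0 such that inf_{w ∈ A} Φ_c(w) = I_* for every c ≥ c_*, then for every c > c_* the set of global minimizers of Φ_c on A coincides with the set of global minimizers of I on M ∩ A; in particular, the penalty function Φ_c is globally exact (there exists c' ≥ 0 such that for all c ≥ c' the two minimizer sets coincide). -/
open scoped ENNReal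

/-- **Abstract exactness of penalty functions.** Let `W` be a set, `A ⊆ W`, `I : W → ℝ ∪ {+∞}`
(formalized as `EReal`-valued with `I w ≠ ⊥`), `φ : W → [0, +∞]`, `M = {w : φ w = 0}` and
`Φ_c = I + c·φ`. If `M ∩ A ≠ ∅`, the optimal value `I_*` of `I` on `M ∩ A` is finite, and there is
`c_* ≥ 0` with `inf_A Φ_c = I_*` for all `c ≥ c_*`, then for every `c > c_*` the global minimizers
of `Φ_c` on `A` are exactly the global minimizers of `I` on `M ∩ A`; in particular the penalty
function is globally exact. -/
theorem penalty_exactness_of_inf_eq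
    {W : Type*} (A : Set W) (I : W → EReal) (hIbot : ∀ w, I w ≠ ⊥)
    (φ : W → ℝ≥0∞) (M : Set W) (hM : M = {w | φ w = 0})
    (Φ : ℝ → W → EReal) (hΦ : ∀ c w, Φ c w = I w + (c : EReal) * ((φ w : ℝ≥0∞) : EReal))
    (hne : (M ∩ A).Nonempty)
    (Istar : ℝ) (hIstar : (⨅ w ∈ M ∩ A, I w) = (Istar : EReal))
    (cstar : ℝ) (hcstar : 0 ≤ cstar)
    (hinf : ∀ c : ℝ, cstar ≤ c → (⨅ w ∈ A, Φ c w) = (Istar : EReal)) :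
    (∀ c : ℝ, cstar < c →
      {w ∈ A | ∀ v ∈ A, Φ c w ≤ Φ c v} = {w ∈ M ∩ A | ∀ v ∈ M ∩ A, I w ≤ I v}) ∧
    ∃ c' : ℝ, 0 ≤ c' ∧ ∀ c : ℝ, c' ≤ c →
      {w ∈ A | ∀ v ∈ A, Φ c w ≤ Φ c v} = {w ∈ M ∩ A | ∀ v ∈ M ∩ A, I w ≤ I v} := by
  -- On M, the penalty vanishes
  have hΦM : ∀ (c : ℝ) (v : W), v ∈ M → Φ c v = I v := by
    intro c v hv
    rw [hM] at hv
    simp only [Set.mem_setOf_eq] at hv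
    rw [hΦ, hv]
    simp
  -- I v ≥ Istar on M ∩ A
  have hIge : ∀ v ∈ M ∩ A, (Istar : EReal) ≤ I v := by
    intro v hv
    rw [← hIstar]
    exact iInf₂_le v hv
  have main : ∀ c : ℝ, cstar < c →
      {w ∈ A | ∀ v ∈ A, Φ c w ≤ Φ c v} = {w ∈ M ∩ A | ∀ v ∈ M ∩ A, I w ≤ I v} := by
    intro c hc
    have hc' : cstar ≤ c := le_of_lt hc
    have hΦge : ∀ (c₀ : ℝ), cstar ≤ c₀ → ∀ v ∈ A, (Istar : EReal) ≤ Φ c₀ v := by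
      intro c₀ hc₀ v hv
      rw [← hinf c₀ hc₀]
      exact iInf₂_le v hv
    ext w
    simp only [Set.mem_setOf_eq]
    constructor
    · rintro ⟨hwA, hwmin⟩
      -- Φ c w = Istar
      have hval : Φ c w = (Istar : EReal) := by
        refine le_antisymm ?_ (hΦge c hc' w hwA)
        rw [← hinf c hc']
        exact le_iInf₂ hwmin
      -- φ w = 0
      have hφ0 : φ w = 0 := by
        by_contra hφ
        rcases eq_or_ne (φ w) ⊤ with htop | htop
        · have : Φ c w = ⊤ := by
            rw [hΦ, htop]
            have hcpos : (0:ℝ) < c := lt_of_le_of_lt hcstar hc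
            rw [EReal.coe_ennreal_top, EReal.mul_top_of_pos (by exact_mod_cast hcpos)]
            exact EReal.add_top_of_ne_bot (hIbot w)
          rw [hval] at this
          exact (EReal.coe_ne_top Istar) this
        · -- φ w is a finite positive real
          set r : ℝ := (φ w).toReal with hr
          have hrpos : 0 < r := ENNReal.toReal_pos hφ htop
          have hφr : ((φ w : ℝ≥0∞) : EReal) = (r : EReal) := by
            rw [hr, ← EReal.toReal_coe_ennreal, EReal.coe_toReal]
            · simp [htop]
            · simp
          -- I w is a finite real
          have hInetop : I w ≠ ⊤ := by
            intro hIt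
            rw [hΦ, hIt] at hval
            have : (⊤ : EReal) + (c : EReal) * ((φ w : ℝ≥0∞) : EReal) = ⊤ := by
              apply EReal.top_add_of_ne_bot
              rw [hφr]
              exact fun h => by simp [← EReal.coe_mul] at h
            rw [this] at hval
            exact (EReal.coe_ne_top Istar) hval.symm
          obtain ⟨t, ht⟩ : ∃ t : ℝ, I w = (t : EReal) := by
            lift I w to ℝ using ⟨hInetop, hIbot w⟩ with t
            exact ⟨t, rfl⟩
          have hval' : t + c * r = Istar := by
            have : Φ c w = ((t + c * r : ℝ) : EReal) := by
              rw [hΦ, ht, hφr, ← EReal.coe_mul, ← EReal.coe_add]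
            rw [this] at hval
            exact_mod_cast hval
          have hlow : (Istar : EReal) ≤ Φ cstar w := hΦge cstar le_rfl w hwA
          have hΦcstar : Φ cstar w = ((t + cstar * r : ℝ) : EReal) := by
            rw [hΦ, ht, hφr, ← EReal.coe_mul, ← EReal.coe_add]
          rw [hΦcstar] at hlow
          have hlow' : Istar ≤ t + cstar * r := by exact_mod_cast hlow
          nlinarith
      have hwM : w ∈ M := by rw [hM]; exact hφ0
      have hIw : I w = (Istar : EReal) := by rw [← hΦM c w hwM]; exact hval
      exact ⟨⟨hwM, hwA⟩, fun v hv => hIw ▸ hIge v hv⟩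
    · rintro ⟨⟨hwM, hwA⟩, hwmin⟩
      have hIw : I w = (Istar : EReal) := by
        refine le_antisymm ?_ (hIge w ⟨hwM, hwA⟩)
        rw [← hIstar]
        exact le_iInf₂ hwmin
      refine ⟨hwA, fun v hv => ?_⟩
      rw [hΦM c w hwM, hIw]
      exact hΦge c hc' v hv
  exact ⟨main, cstar + 1, by linarith, fun c hc => main c (by linarith)⟩
end

section
/- Let 1 ≤ p < ∞ and f : ℝ^d × ℝ^m × Ω → ℝ be such that ω ↦ f(x, y(ω), ω) is integrable for every (x,y) ∈ X = ℝ^d × L^p(Ω;ℝ^m). Suppose there exist C > 0, β ∈ L¹(Ω), and a function ρ : [0, +∞) → [0, +∞) with ρ(t) → +∞ as t → +∞, such that f(x,y,ω) ≥ ρ(|x|) + C|y|^p + β(ω) for all (x,y) ∈ ℝ^d × ℝ^m and a.e. ω ∈ Ω. Then for every c ≥ 0, every γ ∈ ℝ and every function φ : X → [0, +∞], the set {(x,y) ∈ X : 𝓘(x,y) + c·φ(x,y) < γ} is bounded in X, where 𝓘(x,y) = ∫_Ω f(x, y(ω), ω) dP(ω). -/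
open MeasureTheory Filter Set
open scoped ENNReal

/-! Integrating the pointwise coercivity bound against the probability measure gives
`ρ(|x|) + C‖y‖ₚᵖ + ∫β ≤ 𝓘(x,y)`, while `𝓘(x,y) < γ` on the sublevel set since the penalty
`c·φ` is nonnegative. As `ρ ≥ 0` this bounds `‖y‖ₚ`, and as `ρ → +∞` it bounds `|x|`. -/

theorem EReal.lt_of_add_mul_coe_ennreal_lt {a c γ : ℝ} (hc : 0 ≤ c) (e : ℝ≥0∞)
    (h : (a : EReal) + (c : EReal) * (e : EReal) < γ) : a < γ := by
  have hpen : (0 : EReal) ≤ (c : EReal) * (e : EReal) :=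
    mul_nonneg (EReal.coe_nonneg.2 hc) (EReal.coe_ennreal_nonneg e)
  exact EReal.coe_lt_coe_iff.1 ((le_add_of_nonneg_right hpen).trans_lt h)

theorem MeasureTheory.Lp.norm_rpow_toReal_eq_integral {α E : Type*} [MeasurableSpace α]
    {μ : Measure α} [NormedAddCommGroup E] {p : ℝ≥0∞} (hp0 : p ≠ 0) (hp : p ≠ ∞)
    (y : Lp E p μ) : ‖y‖ ^ p.toReal = ∫ ω, ‖y ω‖ ^ p.toReal ∂μ := by
  have hJ : 0 ≤ ∫ ω, ‖y ω‖ ^ p.toReal ∂μ := integral_nonneg fun ω => by positivity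
  rw [Lp.norm_def, (Lp.memLp y).eLpNorm_eq_integral_rpow_norm hp0 hp,
    ENNReal.toReal_ofReal (by positivity),
    Real.rpow_inv_rpow hJ (ENNReal.toReal_ne_zero.2 ⟨hp0, hp⟩)]

theorem isBounded_of_forall_add_mul_norm_rpow_le {E F : Type*} [SeminormedAddCommGroup E]
    [SeminormedAddCommGroup F] {S : Set (E × F)} {ρ : ℝ → ℝ} (hρ0 : ∀ t, 0 ≤ t → 0 ≤ ρ t)
    (hρ : Tendsto ρ atTop atTop) {C q K : ℝ} (hC : 0 < C) (hq : 0 < q)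
    (hS : ∀ z ∈ S, ρ ‖z.1‖ + C * ‖z.2‖ ^ q ≤ K) : Bornology.IsBounded S := by
  obtain ⟨R, hR⟩ := tendsto_atTop_atTop.1 hρ (K + 1)
  rw [isBounded_iff_forall_norm_le]
  refine ⟨max R ((K / C) ^ q⁻¹), fun z hz => max_le_max ?_ ?_⟩
  · have hCq : 0 ≤ C * ‖z.2‖ ^ q := by positivity
    by_contra! hRz
    linarith [hS z hz, hR _ hRz.le]
  · have hρz := hρ0 _ (norm_nonneg z.1)
    have hqK : ‖z.2‖ ^ q ≤ K / C := by
      rw [le_div_iff₀ hC]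
      linarith [hS z hz]
    have hKC : 0 ≤ K / C := (by positivity : (0 : ℝ) ≤ ‖z.2‖ ^ q).trans hqK
    exact (Real.le_rpow_inv_iff_of_pos (norm_nonneg _) hKC hq).2 hqK

theorem le_integral_comp_Lp_of_coercive {α E F : Type*} [MeasurableSpace α] {μ : Measure α}
    [IsProbabilityMeasure μ] [Norm E] [NormedAddCommGroup F] {p : ℝ≥0∞} (hp0 : p ≠ 0) (hp : p ≠ ∞)
    {f : E → F → α → ℝ} {ρ : ℝ → ℝ} {C : ℝ} {β : α → ℝ} (hβ : Integrable β μ)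
    (hcoerc : ∀ᵐ ω ∂μ, ∀ x y, ρ ‖x‖ + C * ‖y‖ ^ p.toReal + β ω ≤ f x y ω) (x : E) (y : Lp F p μ)
    (hint : Integrable (fun ω => f x (y ω) ω) μ) :
    ρ ‖x‖ + C * ‖y‖ ^ p.toReal + ∫ ω, β ω ∂μ ≤ ∫ ω, f x (y ω) ω ∂μ := by
  have hnorm : Integrable (fun ω => ‖y ω‖ ^ p.toReal) μ :=
    (Lp.memLp y).integrable_norm_rpow hp0 hp
  have hlower : Integrable (fun ω => ρ ‖x‖ + C * ‖y ω‖ ^ p.toReal + β ω) μ :=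
    ((integrable_const _).add (hnorm.const_mul C)).add hβ
  calc ρ ‖x‖ + C * ‖y‖ ^ p.toReal + ∫ ω, β ω ∂μ
      = ∫ ω, ρ ‖x‖ + C * ‖y ω‖ ^ p.toReal + β ω ∂μ := by
        rw [integral_add (f := fun ω => ρ ‖x‖ + C * ‖y ω‖ ^ p.toReal)
            ((integrable_const _).add (hnorm.const_mul C)) hβ,
          integral_add (integrable_const _) (hnorm.const_mul C), integral_const, integral_const_mul,
          Lp.norm_rpow_toReal_eq_integral hp0 hp]
        simp
    _ ≤ ∫ ω, f x (y ω) ω ∂μ := integral_mono_ae hlower hint (hcoerc.mono fun ω hω => hω x (y ω))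

/-- **Boundedness of penalty sublevel sets under coercivity.** Let `1 ≤ p < ∞` and let the
integrand satisfy the coercivity condition `f(x,y,ω) ≥ ρ(|x|) + C|y|^p + β(ω)` with
`ρ(t) → +∞` as `t → +∞`. Then for every `c ≥ 0`, every `γ ∈ ℝ` and every penalty term
`φ : X → [0,+∞]`, the sublevel set `{(x,y) ∈ X : 𝓘(x,y) + c·φ(x,y) < γ}` is bounded in
`X = ℝ^d × L^p(Ω;ℝ^m)`. -/
theorem sublevel_bounded_of_coercive
    {d m : ℕ} {Ω : Type*} [MeasurableSpace Ω] (P : Measure Ω) [IsProbabilityMeasure P]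
    (p : ℝ≥0∞) [Fact (1 ≤ p)] (hp : p ≠ ∞)
    (f : EuclideanSpace ℝ (Fin d) → EuclideanSpace ℝ (Fin m) → Ω → ℝ)
    (hint : ∀ (x : EuclideanSpace ℝ (Fin d)) (y : Lp (EuclideanSpace ℝ (Fin m)) p P),
      Integrable (fun ω => f x (y ω) ω) P)
    (C : ℝ) (hC : 0 < C) (β : Ω → ℝ) (hβ : Integrable β P)
    (ρ : ℝ → ℝ) (hρ0 : ∀ t, 0 ≤ t → 0 ≤ ρ t) (hρ : Tendsto ρ atTop atTop)
    (hcoerc : ∀ᵐ ω ∂P, ∀ (x : EuclideanSpace ℝ (Fin d)) (y : EuclideanSpace ℝ (Fin m)),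
      ρ ‖x‖ + C * ‖y‖ ^ p.toReal + β ω ≤ f x y ω)
    (c : ℝ) (hc : 0 ≤ c) (γ : ℝ)
    (φ : EuclideanSpace ℝ (Fin d) × Lp (EuclideanSpace ℝ (Fin m)) p P → ℝ≥0∞) :
    Bornology.IsBounded {z : EuclideanSpace ℝ (Fin d) × Lp (EuclideanSpace ℝ (Fin m)) p P |
      ((∫ ω, f z.1 (z.2 ω) ω ∂P : ℝ) : EReal) + (c : EReal) * ((φ z : ℝ≥0∞) : EReal)
        < (γ : EReal)} := by
  have hp0 : p ≠ 0 := (zero_lt_one.trans_le (Fact.out : 1 ≤ p)).ne'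
  have hpr : 0 < p.toReal := ENNReal.toReal_pos hp0 hp
  refine isBounded_of_forall_add_mul_norm_rpow_le hρ0 hρ hC hpr
    (K := γ - ∫ ω, β ω ∂P) fun z hz => ?_
  have hlower := le_integral_comp_Lp_of_coercive hp0 hp hβ hcoerc z.1 z.2 (hint z.1 z.2)
  have hsub := EReal.lt_of_add_mul_coe_ennreal_lt hc (φ z) hz
  linarith
end
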